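/- arXiv:0704.1077 — 6 statements merged into one kernel-verified Lean document; each statement's English description precedes it below -/
import Mathlib

section
/- Let Ω ⊆ ℝ^d be open and let A be a solid subring of the ring of functions (0,1] → ℝ. Let H(Ω) be the set of all families (u_ε)_{ε∈(0,1]} of smooth real-valued functions on Ω such that for every compact K ⊆ Ω and every l ∈ ℕ the function ε ↦ p_{K,l}(u_ε) belongs to A. Then H(Ω) is closed under pointwise addition and pointwise multiplication of families: if (u_ε) and (v_ε) belong to H(Ω) then so do (u_ε + v_ε) and (u_ε · v_ε). -/
open Filter Topology

noncomputable section

/-- `p_{K,l}(f)`: sup over `x ∈ K` and `0 ≤ i ≤ l` of `‖iteratedFDeriv ℝ i f x‖`. -/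
def pKl {d : ℕ} (K : Set (Fin d → ℝ)) (l : ℕ) (f : (Fin d → ℝ) → ℝ) : ℝ :=
  ⨆ x : K, ⨆ i : Fin (l + 1), ‖iteratedFDeriv ℝ i.1 f x.1‖

lemma pKl_nonneg {d : ℕ} (K : Set (Fin d → ℝ)) (l : ℕ) (f : (Fin d → ℝ) → ℝ) :
    0 ≤ pKl K l f :=
  Real.iSup_nonneg fun _ => Real.iSup_nonneg fun _ => norm_nonneg _

lemma pKl_bddAbove {d : ℕ} {K : Set (Fin d → ℝ)} (hK : IsCompact K) (l : ℕ)
    {f : (Fin d → ℝ) → ℝ} (hf : ContDiff ℝ (⊤ : ℕ∞) f) :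
    BddAbove (Set.range fun x : K => ⨆ i : Fin (l + 1), ‖iteratedFDeriv ℝ i.1 f x.1‖) := by
  have hcont : Continuous fun x => ∑ i : Fin (l + 1), ‖iteratedFDeriv ℝ i.1 f x‖ := by
    refine continuous_finset_sum _ fun i _ => ?_
    exact (hf.continuous_iteratedFDeriv (by exact_mod_cast le_top)).norm
  obtain ⟨M, hM⟩ := (hK.bddAbove_image hcont.continuousOn)
  refine ⟨M, ?_⟩
  rintro y ⟨x, rfl⟩
  refine ciSup_le fun i => ?_
  calc ‖iteratedFDeriv ℝ i.1 f x.1‖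
      ≤ ∑ j : Fin (l + 1), ‖iteratedFDeriv ℝ j.1 f x.1‖ :=
        Finset.single_le_sum (f := fun j : Fin (l + 1) => ‖iteratedFDeriv ℝ j.1 f x.1‖)
          (fun j _ => norm_nonneg _) (Finset.mem_univ i)
    _ ≤ M := hM (Set.mem_image_of_mem _ x.2)

lemma le_pKl {d : ℕ} {K : Set (Fin d → ℝ)} (hK : IsCompact K) {l : ℕ}
    {f : (Fin d → ℝ) → ℝ} (hf : ContDiff ℝ (⊤ : ℕ∞) f)
    (x : K) (i : Fin (l + 1)) : ‖iteratedFDeriv ℝ i.1 f x.1‖ ≤ pKl K l f := by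
  have h1 : ‖iteratedFDeriv ℝ i.1 f x.1‖ ≤ ⨆ j : Fin (l + 1), ‖iteratedFDeriv ℝ j.1 f x.1‖ :=
    le_ciSup (f := fun j : Fin (l + 1) => ‖iteratedFDeriv ℝ j.1 f x.1‖)
      (Set.Finite.bddAbove (Set.finite_range _)) i
  exact h1.trans (le_ciSup (pKl_bddAbove hK l hf) x)

lemma pKl_add_le {d : ℕ} {K : Set (Fin d → ℝ)} (hK : IsCompact K) (l : ℕ)
    {f g : (Fin d → ℝ) → ℝ} (hf : ContDiff ℝ (⊤ : ℕ∞) f) (hg : ContDiff ℝ (⊤ : ℕ∞) g) :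
    pKl K l (fun y => f y + g y) ≤ pKl K l f + pKl K l g := by
  rcases isEmpty_or_nonempty K with hKe | hKe
  · rw [pKl, iSup_of_empty', Real.sSup_empty]
    exact add_nonneg (pKl_nonneg _ _ _) (pKl_nonneg _ _ _)
  refine ciSup_le fun x => ciSup_le fun i => ?_
  have hadd : iteratedFDeriv ℝ i.1 (fun y => f y + g y) x.1
      = iteratedFDeriv ℝ i.1 f x.1 + iteratedFDeriv ℝ i.1 g x.1 := by
    have := iteratedFDeriv_add_apply (i := i.1) (f := f) (g := g)
      (hf.contDiffAt.of_le (by exact_mod_cast le_top)) (hg.contDiffAt.of_le (by exact_mod_cast le_top)) (x := x.1)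
    simpa [Pi.add_def] using this
  calc ‖iteratedFDeriv ℝ i.1 (fun y => f y + g y) x.1‖
      ≤ ‖iteratedFDeriv ℝ i.1 f x.1‖ + ‖iteratedFDeriv ℝ i.1 g x.1‖ := by
        rw [hadd]; exact norm_add_le _ _
    _ ≤ pKl K l f + pKl K l g := add_le_add (le_pKl hK hf x i) (le_pKl hK hg x i)

lemma pKl_mul_le {d : ℕ} {K : Set (Fin d → ℝ)} (hK : IsCompact K) (l : ℕ)
    {f g : (Fin d → ℝ) → ℝ} (hf : ContDiff ℝ (⊤ : ℕ∞) f) (hg : ContDiff ℝ (⊤ : ℕ∞) g) :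
    pKl K l (fun y => f y * g y) ≤ (2 ^ l : ℝ) * (pKl K l f * pKl K l g) := by
  have hnn : 0 ≤ (2 ^ l : ℝ) * (pKl K l f * pKl K l g) :=
    mul_nonneg (by positivity) (mul_nonneg (pKl_nonneg _ _ _) (pKl_nonneg _ _ _))
  rcases isEmpty_or_nonempty K with hKe | hKe
  · rw [pKl, iSup_of_empty', Real.sSup_empty]; exact hnn
  refine ciSup_le fun x => ciSup_le fun n => ?_
  have h1 := norm_iteratedFDeriv_mul_le (𝕜 := ℝ) (f := f) (g := g)
    hf hg x.1 (n := n.1) (by exact_mod_cast le_top)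
  have h2 : ∑ i ∈ Finset.range (n.1 + 1),
      (n.1.choose i : ℝ) * ‖iteratedFDeriv ℝ i f x.1‖ * ‖iteratedFDeriv ℝ (n.1 - i) g x.1‖
      ≤ ∑ i ∈ Finset.range (n.1 + 1), (n.1.choose i : ℝ) * (pKl K l f * pKl K l g) := by
    refine Finset.sum_le_sum fun i hi => ?_
    rw [Finset.mem_range, Nat.lt_succ_iff] at hi
    have hif : ‖iteratedFDeriv ℝ i f x.1‖ ≤ pKl K l f :=
      le_pKl hK hf x ⟨i, Nat.lt_succ_of_le (hi.trans (Nat.lt_succ_iff.mp n.2))⟩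
    have hig : ‖iteratedFDeriv ℝ (n.1 - i) g x.1‖ ≤ pKl K l g :=
      le_pKl hK hg x ⟨n.1 - i, Nat.lt_succ_of_le ((Nat.sub_le _ _).trans (Nat.lt_succ_iff.mp n.2))⟩
    rw [mul_assoc]
    exact mul_le_mul_of_nonneg_left
      (mul_le_mul hif hig (norm_nonneg _) (pKl_nonneg _ _ _)) (Nat.cast_nonneg _)
  have h3 : ∑ i ∈ Finset.range (n.1 + 1), (n.1.choose i : ℝ) * (pKl K l f * pKl K l g)
      = (2 ^ n.1 : ℝ) * (pKl K l f * pKl K l g) := by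
    rw [← Finset.sum_mul]
    congr 1
    rw [← Nat.cast_sum, Nat.sum_range_choose]
    push_cast; ring
  have h4 : (2 ^ n.1 : ℝ) ≤ (2 ^ l : ℝ) := by
    apply pow_le_pow_right₀ (by norm_num)
    exact Nat.lt_succ_iff.mp n.2
  calc ‖iteratedFDeriv ℝ n.1 (fun y => f y * g y) x.1‖
      ≤ (2 ^ n.1 : ℝ) * (pKl K l f * pKl K l g) := h1.trans (h2.trans_eq h3)
    _ ≤ (2 ^ l : ℝ) * (pKl K l f * pKl K l g) :=
        mul_le_mul_of_nonneg_right h4 (mul_nonneg (pKl_nonneg _ _ _) (pKl_nonneg _ _ _))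

/-- `H(Ω)` is closed under pointwise addition and multiplication of
families of smooth functions. -/
theorem H_closed_add_mul {d : ℕ} (Ω : Set (Fin d → ℝ)) (hΩ : IsOpen Ω)
    (A : Subring (Set.Ioc (0:ℝ) 1 → ℝ))
    (hsolid : ∀ s r : Set.Ioc (0:ℝ) 1 → ℝ, r ∈ A → (∀ ε, |s ε| ≤ |r ε|) → s ∈ A)
    (u v : Set.Ioc (0:ℝ) 1 → (Fin d → ℝ) → ℝ)
    (hu_smooth : ∀ ε, ContDiff ℝ (⊤ : ℕ∞) (u ε))
    (hv_smooth : ∀ ε, ContDiff ℝ (⊤ : ℕ∞) (v ε))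
    (hu : ∀ K ⊆ Ω, IsCompact K → ∀ l : ℕ, (fun ε => pKl K l (u ε)) ∈ A)
    (hv : ∀ K ⊆ Ω, IsCompact K → ∀ l : ℕ, (fun ε => pKl K l (v ε)) ∈ A) :
    (∀ K ⊆ Ω, IsCompact K → ∀ l : ℕ, (fun ε => pKl K l (fun y => u ε y + v ε y)) ∈ A) ∧
    (∀ K ⊆ Ω, IsCompact K → ∀ l : ℕ, (fun ε => pKl K l (fun y => u ε y * v ε y)) ∈ A) := by
  constructor
  · intro K hKΩ hK l
    refine hsolid _ (fun ε => pKl K l (u ε) + pKl K l (v ε)) ?_ ?_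
    · exact A.add_mem (hu K hKΩ hK l) (hv K hKΩ hK l)
    · intro ε
      rw [abs_of_nonneg (pKl_nonneg _ _ _),
        abs_of_nonneg (add_nonneg (pKl_nonneg _ _ _) (pKl_nonneg _ _ _))]
      exact pKl_add_le hK l (hu_smooth ε) (hv_smooth ε)
  · intro K hKΩ hK l
    refine hsolid _ (fun ε => ((2 ^ l : ℕ) : ℝ) * (pKl K l (u ε) * pKl K l (v ε))) ?_ ?_
    · have h2 : (fun _ : Set.Ioc (0:ℝ) 1 => ((2 ^ l : ℕ) : ℝ)) ∈ A := by
        exact_mod_cast natCast_mem A (2 ^ l)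
      exact A.mul_mem h2 (A.mul_mem (hu K hKΩ hK l) (hv K hKΩ hK l))
    · intro ε
      have hnn : 0 ≤ ((2 ^ l : ℕ) : ℝ) * (pKl K l (u ε) * pKl K l (v ε)) :=
        mul_nonneg (by positivity) (mul_nonneg (pKl_nonneg _ _ _) (pKl_nonneg _ _ _))
      rw [abs_of_nonneg (pKl_nonneg _ _ _), abs_of_nonneg hnn]
      have := pKl_mul_le hK l (hu_smooth ε) (hv_smooth ε)
      simpa using this
end
end

section
/- Let E be a real vector space equipped with a family of seminorms (q_j)_{j∈J}. Let Λ be a type with a nontrivial (NeBot) filter ℓ on it, let a : ℝ → Λ → ℝ be such that a(r)(λ) ≥ 0 for all r ≥ 0 and λ, a(r+s)(λ) ≤ a(r)(λ)·a(s)(λ) for all r, s ≥ 0 and all λ, and for every r > 0 the function λ ↦ a(r)(λ) tends to 0 along ℓ. Let u : Λ → E, r ≥ 0 and f ∈ E, and assume that for every j ∈ J the function λ ↦ q_j(a(r)(λ) • u(λ) − f) tends to 0 along ℓ, and that there exists j₀ ∈ J with q_{j₀}(f) > 0. Then for every t with 0 ≤ t < r there is no g ∈ E such that for every j ∈ J the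 function λ ↦ q_j(a(t)(λ) • u(λ) − g) tends to 0 along ℓ. -/
open Filter Topology

private lemma tendsto_seminorm_of_tendsto_sub {E : Type*} [AddCommGroup E] [Module ℝ E]
    {Λ : Type*} {ℓ : Filter Λ} (q : Seminorm ℝ E) {v : Λ → E} {c : E}
    (h : Tendsto (fun lam => q (v lam - c)) ℓ (nhds 0)) :
    Tendsto (fun lam => q (v lam)) ℓ (nhds (q c)) := by
  have : Tendsto (fun lam => q (v lam) - q c) ℓ (nhds 0) :=
    squeeze_zero_norm (fun lam => Seminorm.norm_sub_map_le_sub q (v lam) c) h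
  simpa using this.add_const (q c)

/-- if `a(r)·u → f` in every seminorm with `f` not seminorm-null,
then for `0 ≤ t < r` there is no `g` with `a(t)·u → g` in every seminorm. -/
theorem no_assoc_below_scale {E : Type*} [AddCommGroup E] [Module ℝ E]
    {J : Type*} (q : J → Seminorm ℝ E)
    {Λ : Type*} (ℓ : Filter Λ) [ℓ.NeBot] (a : ℝ → Λ → ℝ)
    (ha_nonneg : ∀ r : ℝ, 0 ≤ r → ∀ lam : Λ, 0 ≤ a r lam)
    (ha_submul : ∀ r s : ℝ, 0 ≤ r → 0 ≤ s → ∀ lam : Λ, a (r + s) lam ≤ a r lam * a s lam)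
    (ha_tendsto : ∀ r : ℝ, 0 < r → Tendsto (a r) ℓ (nhds 0))
    (u : Λ → E) (r : ℝ) (hr : 0 ≤ r) (f : E)
    (h : ∀ j : J, Tendsto (fun lam => q j (a r lam • u lam - f)) ℓ (nhds 0))
    (hf : ∃ j₀ : J, 0 < q j₀ f) :
    ∀ t : ℝ, 0 ≤ t → t < r →
      ¬ ∃ g : E, ∀ j : J, Tendsto (fun lam => q j (a t lam • u lam - g)) ℓ (nhds 0) := by
  intro t ht htr ⟨g, hg⟩
  obtain ⟨j₀, hj₀⟩ := hf
  have h1 : Tendsto (fun lam => q j₀ (a r lam • u lam)) ℓ (nhds (q j₀ f)) :=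
    tendsto_seminorm_of_tendsto_sub _ (h j₀)
  have h2 : Tendsto (fun lam => q j₀ (a t lam • u lam)) ℓ (nhds (q j₀ g)) :=
    tendsto_seminorm_of_tendsto_sub _ (hg j₀)
  have h3 : Tendsto (fun lam => a (r - t) lam * q j₀ (a t lam • u lam)) ℓ (nhds 0) := by
    have := (ha_tendsto (r - t) (by linarith)).mul h2
    simpa using this
  have hle : ∀ lam, q j₀ (a r lam • u lam) ≤ a (r - t) lam * q j₀ (a t lam • u lam) := by
    intro lam
    rw [map_smul_eq_mul, map_smul_eq_mul, Real.norm_eq_abs, Real.norm_eq_abs, abs_of_nonneg (ha_nonneg r hr lam),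
      abs_of_nonneg (ha_nonneg t ht lam), ← mul_assoc]
    have := ha_submul (r - t) t (by linarith) ht lam
    rw [sub_add_cancel] at this
    exact mul_le_mul_of_nonneg_right (by rw [mul_comm] at this; exact this.trans (by ring_nf; rfl))
      (apply_nonneg _ _)
  have : q j₀ f ≤ 0 := le_of_tendsto_of_tendsto h1 h3 (Eventually.of_forall hle)
  linarith
end

section
/- Let Ω ⊆ ℝ^d be open, p ∈ ℕ, x ∈ Ω, and let (u_ε)_{ε∈(0,1]} be a family of smooth real-valued functions on Ω that is moderate: for every compact K ⊆ Ω and every l ∈ ℕ there exists m ∈ ℕ such that ε^m · p_{K,l}(u_ε) → 0 as ε → 0⁺. For a compact K ⊆ Ω and l ∈ ℕ define v_{K,l}(u) = sInf { r ∈ ℝ : ε^r · p_{K,l}(u_ε) → 0 as ε → 0⁺ } and ν_{K,l}(u) = max(v_{K,l}(u), 0); define ν_{x,l}(u) = sInf { ν_{closure V, l}(u) : V open, x ∈ V, closure of V compact and contained in Ω } and ν_x^p(u) = max over 0 ≤ l ≤ p of ν_{x,l}(u). Let N = { r ∈ ℝ : r ≥ 0 and there exist an open neighborhood V ⊆ Ω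 of x and a function f on V that is p-times continuously differentiable such that for every 0 ≤ i ≤ p, iteratedFDeriv ℝ i of (y ↦ ε^r u_ε(y)) converges to iteratedFDeriv ℝ i of f uniformly on every compact subset of V as ε → 0⁺ }. Then ν_x^p(u) = sInf N. -/
open Filter Topology

noncomputable section

/-- The filter of `ε` tending to `0` from the right in `(0,1]`. -/
def l01 : Filter (Set.Ioc (0:ℝ) 1) := Filter.comap Subtype.val (nhdsWithin 0 (Set.Ioi 0))

/-- The `(K,l)`-valuation `v_{K,l}(u)`. -/
def vKl {d : ℕ} (u : Set.Ioc (0:ℝ) 1 → (Fin d → ℝ) → ℝ) (K : Set (Fin d → ℝ))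
    (l : ℕ) : ℝ :=
  sInf {r : ℝ | Tendsto (fun ε : Set.Ioc (0:ℝ) 1 => (ε : ℝ) ^ r * pKl K l (u ε)) l01 (nhds 0)}

/-- `ν_{K,l}(u) = max(v_{K,l}(u), 0)`. -/
def nuKl {d : ℕ} (u : Set.Ioc (0:ℝ) 1 → (Fin d → ℝ) → ℝ) (K : Set (Fin d → ℝ))
    (l : ℕ) : ℝ :=
  max (vKl u K l) 0

/-- `ν_{x,l}(u)`, the `l`-valuation of `u` at `x`. -/
def nuxl {d : ℕ} (Ω : Set (Fin d → ℝ)) (u : Set.Ioc (0:ℝ) 1 → (Fin d → ℝ) → ℝ)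
    (x : Fin d → ℝ) (l : ℕ) : ℝ :=
  sInf {y : ℝ | ∃ V : Set (Fin d → ℝ), IsOpen V ∧ x ∈ V ∧
    IsCompact (closure V) ∧ closure V ⊆ Ω ∧ y = nuKl u (closure V) l}

/-- `ν_x^p(u) = max over 0 ≤ l ≤ p of ν_{x,l}(u)`. -/
def nuxp {d : ℕ} (Ω : Set (Fin d → ℝ)) (u : Set.Ioc (0:ℝ) 1 → (Fin d → ℝ) → ℝ)
    (x : Fin d → ℝ) (p : ℕ) : ℝ :=
  ⨆ l : Fin (p + 1), nuxl Ω u x l.1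

instance : l01.NeBot := by
  rw [l01, Filter.comap_neBot_iff]
  intro t ht
  obtain ⟨U, hU, h0U, hsub⟩ := mem_nhdsWithin.mp ht
  obtain ⟨δ, hδ, hball⟩ := Metric.isOpen_iff.1 hU 0 h0U
  have hpos : (0:ℝ) < min (δ/2) 1 := lt_min (by linarith) one_pos
  refine ⟨⟨min (δ/2) 1, ⟨hpos, min_le_right _ _⟩⟩, hsub ⟨hball ?_, hpos⟩⟩
  rw [Metric.mem_ball, dist_zero_right, Real.norm_eq_abs, abs_of_pos hpos]
  have : min (δ/2) 1 ≤ δ/2 := min_le_left _ _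
  linarith

lemma tendsto_rpow_l01 {s : ℝ} (hs : 0 < s) :
    Tendsto (fun ε : Set.Ioc (0:ℝ) 1 => (ε:ℝ)^s) l01 (𝓝 0) := by
  have h1 : ContinuousAt (fun x:ℝ => x ^ s) 0 :=
    Real.continuousAt_rpow_const 0 s (Or.inr hs.le)
  have h2 : Tendsto (fun x:ℝ => x^s) (𝓝[>] 0) (𝓝 0) := by
    have := h1.tendsto
    rw [Real.zero_rpow hs.ne'] at this
    exact this.mono_left nhdsWithin_le_nhds
  exact h2.comp tendsto_comap

lemma pKl_le {d : ℕ} {K : Set (Fin d → ℝ)} {l : ℕ} {f : (Fin d → ℝ) → ℝ} {C : ℝ}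
    (h : ∀ y ∈ K, ∀ i : ℕ, i ≤ l → ‖iteratedFDeriv ℝ i f y‖ ≤ C) (hC : 0 ≤ C) :
    pKl K l f ≤ C :=
  Real.iSup_le (fun z => Real.iSup_le (fun j => h z z.2 j (Nat.lt_succ_iff.1 j.2)) hC) hC

lemma norm_le_pKl {d : ℕ} {K : Set (Fin d → ℝ)} (hK : IsCompact K) {l : ℕ}
    {f : (Fin d → ℝ) → ℝ} (hf : ContDiff ℝ (⊤:ℕ∞) f) {y : Fin d → ℝ} (hy : y ∈ K)
    {i : ℕ} (hi : i ≤ l) : ‖iteratedFDeriv ℝ i f y‖ ≤ pKl K l f := by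
  have hbd : ∀ j : Fin (l+1), ∃ C, ∀ z ∈ K, ‖iteratedFDeriv ℝ j.1 f z‖ ≤ C := by
    intro j
    obtain ⟨C, hC⟩ := hK.exists_bound_of_continuousOn
      ((hf.continuous_iteratedFDeriv (by exact_mod_cast le_top)).continuousOn (s := K))
    exact ⟨C, hC⟩
  choose C hC using hbd
  have hne : (Finset.univ : Finset (Fin (l+1))).Nonempty := Finset.univ_nonempty
  set D := Finset.univ.sup' hne C with hD
  have hbdd : BddAbove (Set.range fun z : K => ⨆ j : Fin (l+1), ‖iteratedFDeriv ℝ j.1 f z.1‖) := by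
    refine ⟨max D 0, ?_⟩
    rintro _ ⟨z, rfl⟩
    exact Real.iSup_le (fun j => (hC j z.1 z.2).trans
      ((Finset.le_sup' C (Finset.mem_univ j)).trans (le_max_left _ _))) (le_max_right _ _)
  calc ‖iteratedFDeriv ℝ i f y‖
      ≤ ⨆ j : Fin (l+1), ‖iteratedFDeriv ℝ j.1 f y‖ :=
        le_ciSup (f := fun j : Fin (l+1) => ‖iteratedFDeriv ℝ j.1 f y‖)
          (Set.Finite.bddAbove (Set.finite_range _)) (⟨i, Nat.lt_succ_of_le hi⟩ : Fin (l+1))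
    _ ≤ pKl K l f := le_ciSup hbdd (⟨y, hy⟩ : K)

lemma exists_nice_nbhd {d : ℕ} {Ω : Set (Fin d → ℝ)} (hΩ : IsOpen Ω) {x : Fin d → ℝ}
    (hx : x ∈ Ω) : ∃ V : Set (Fin d → ℝ), IsOpen V ∧ x ∈ V ∧ IsCompact (closure V) ∧
    closure V ⊆ Ω := by
  obtain ⟨δ, hδ, hball⟩ := Metric.isOpen_iff.1 hΩ x hx
  refine ⟨Metric.ball x (δ/2), Metric.isOpen_ball, Metric.mem_ball_self (by linarith), ?_, ?_⟩
  · exact (isCompact_closedBall x _).of_isClosed_subset isClosed_closure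
      Metric.closure_ball_subset_closedBall
  · exact (Metric.closure_ball_subset_closedBall.trans
      (Metric.closedBall_subset_ball (by linarith))).trans hball

lemma nuxl_nonneg {d : ℕ} (Ω : Set (Fin d → ℝ)) (u : Set.Ioc (0:ℝ) 1 → (Fin d → ℝ) → ℝ)
    (x : Fin d → ℝ) (l : ℕ) : 0 ≤ nuxl Ω u x l := by
  refine Real.sInf_nonneg ?_
  rintro y ⟨V, _, _, _, _, rfl⟩
  exact le_max_right _ _

lemma nuxp_nonneg {d : ℕ} (Ω : Set (Fin d → ℝ)) (u : Set.Ioc (0:ℝ) 1 → (Fin d → ℝ) → ℝ)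
    (x : Fin d → ℝ) (p : ℕ) : 0 ≤ nuxp Ω u x p :=
  Real.iSup_nonneg fun l => nuxl_nonneg Ω u x l.1

lemma mem_N_of_nuxp_lt {d : ℕ} (Ω : Set (Fin d → ℝ)) (hΩ : IsOpen Ω) (p : ℕ)
    (x : Fin d → ℝ) (hx : x ∈ Ω)
    (u : Set.Ioc (0:ℝ) 1 → (Fin d → ℝ) → ℝ)
    (hsmooth : ∀ ε, ContDiff ℝ (⊤ : ℕ∞) (u ε))
    (hmod : ∀ K ⊆ Ω, IsCompact K → ∀ l : ℕ, ∃ m : ℕ,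
      Tendsto (fun ε : Set.Ioc (0:ℝ) 1 => (ε : ℝ) ^ m * pKl K l (u ε)) l01 (nhds 0))
    {r : ℝ} (hr : nuxp Ω u x p < r) :
    r ∈ {r : ℝ | 0 ≤ r ∧ ∃ (V : Set (Fin d → ℝ)) (f : (Fin d → ℝ) → ℝ),
        IsOpen V ∧ x ∈ V ∧ V ⊆ Ω ∧ ContDiffOn ℝ (p : ℕ∞) f V ∧
        ∀ i ≤ p, ∀ K ⊆ V, IsCompact K →
          TendstoUniformlyOn
            (fun (ε : Set.Ioc (0:ℝ) 1) y =>
              iteratedFDeriv ℝ i (fun z => (ε : ℝ) ^ r * u ε z) y)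
            (iteratedFDeriv ℝ i f) l01 K} := by
  have hr0 : 0 ≤ r := (nuxp_nonneg Ω u x p).trans hr.le
  have hle : nuxl Ω u x p ≤ nuxp Ω u x p :=
    le_ciSup (f := fun l : Fin (p+1) => nuxl Ω u x l.1)
      (Set.Finite.bddAbove (Set.finite_range _)) (⟨p, Nat.lt_succ_self p⟩ : Fin (p+1))
  have h1 : nuxl Ω u x p < r := lt_of_le_of_lt hle hr
  obtain ⟨V₀, hV₀o, hxV₀, hV₀c, hV₀Ω⟩ := exists_nice_nbhd hΩ hx
  have hne : {y : ℝ | ∃ V : Set (Fin d → ℝ), IsOpen V ∧ x ∈ V ∧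
      IsCompact (closure V) ∧ closure V ⊆ Ω ∧ y = nuKl u (closure V) p}.Nonempty :=
    ⟨nuKl u (closure V₀) p, V₀, hV₀o, hxV₀, hV₀c, hV₀Ω, rfl⟩
  obtain ⟨y₀, ⟨V, hVo, hxV, hVc, hVΩ, rfl⟩, hyr⟩ := exists_lt_of_csInf_lt hne h1
  have hvr : vKl u (closure V) p < r := lt_of_le_of_lt (le_max_left _ _) hyr
  obtain ⟨m, hm⟩ := hmod (closure V) hVΩ hVc p
  have hmS : ((m:ℝ)) ∈ {s : ℝ | Tendsto
      (fun ε : Set.Ioc (0:ℝ) 1 => (ε : ℝ) ^ s * pKl (closure V) p (u ε)) l01 (nhds 0)} := by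
    simpa [Real.rpow_natCast] using hm
  obtain ⟨r', hr'S, hr'r⟩ := exists_lt_of_csInf_lt ⟨_, hmS⟩ hvr
  refine ⟨hr0, V, (fun _ => 0), hVo, hxV, subset_closure.trans hVΩ, contDiffOn_const, ?_⟩
  intro i hip K₀ hK₀V hK₀c
  rw [Metric.tendstoUniformlyOn_iff]
  intro δ hδ
  have htd := Metric.tendsto_nhds.mp hr'S δ hδ
  filter_upwards [htd] with ε hε y hy
  have hεpos : (0:ℝ) < ε := ε.2.1
  have h0 : (iteratedFDeriv ℝ i fun _ : (Fin d → ℝ) => (0:ℝ)) = 0 := iteratedFDeriv_zero_fun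
  rw [h0]
  simp only [Pi.zero_apply]
  rw [dist_zero_left]
  have hsm : ContDiff ℝ (i:ℕ∞) (u ε) := (hsmooth ε).of_le (by exact_mod_cast le_top)
  have hre : (fun z => (ε:ℝ)^r * u ε z) = (fun z => (ε:ℝ)^r • u ε z) := by
    simp [smul_eq_mul]
  have heq : ‖iteratedFDeriv ℝ i (fun z => (ε:ℝ)^r * u ε z) y‖
      = (ε:ℝ)^r * ‖iteratedFDeriv ℝ i (u ε) y‖ := by
    rw [hre, iteratedFDeriv_const_smul_apply' hsm.contDiffAt,
      norm_smul ((ε:ℝ)^r) (iteratedFDeriv ℝ i (u ε) y), Real.norm_eq_abs,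
      abs_of_pos (Real.rpow_pos_of_pos hεpos r)]
  rw [heq]
  have hbound : ‖iteratedFDeriv ℝ i (u ε) y‖ ≤ pKl (closure V) p (u ε) :=
    norm_le_pKl hVc (hsmooth ε) (subset_closure (hK₀V hy)) hip
  have h2 : (ε:ℝ)^r = (ε:ℝ)^(r - r') * (ε:ℝ)^r' := by
    rw [← Real.rpow_add hεpos]; ring_nf
  have h3 : (ε:ℝ)^(r-r') ≤ 1 := Real.rpow_le_one hεpos.le ε.2.2 (by linarith)
  have h4 : (0:ℝ) < (ε:ℝ)^r' := Real.rpow_pos_of_pos hεpos r'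
  have h5 : (ε:ℝ)^r' * ‖iteratedFDeriv ℝ i (u ε) y‖ ≤ (ε:ℝ)^r' * pKl (closure V) p (u ε) :=
    mul_le_mul_of_nonneg_left hbound h4.le
  calc (ε:ℝ)^r * ‖iteratedFDeriv ℝ i (u ε) y‖
      = (ε:ℝ)^(r-r') * ((ε:ℝ)^r' * ‖iteratedFDeriv ℝ i (u ε) y‖) := by rw [h2]; ring
    _ ≤ 1 * ((ε:ℝ)^r' * pKl (closure V) p (u ε)) :=
        mul_le_mul h3 h5 (by positivity) one_pos.le
    _ = (ε:ℝ)^r' * pKl (closure V) p (u ε) := one_mul _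
    _ ≤ |(ε:ℝ)^r' * pKl (closure V) p (u ε)| := le_abs_self _
    _ < δ := by rwa [Real.dist_eq, sub_zero] at hε

/-- the valuation `ν_x^p(u)` equals the infimum of the set `N` of
scales `r ≥ 0` for which `ε^r u_ε` converges in `C^p` near `x`. -/
theorem nuxp_eq_sInf_N {d : ℕ} (Ω : Set (Fin d → ℝ)) (hΩ : IsOpen Ω) (p : ℕ)
    (x : Fin d → ℝ) (hx : x ∈ Ω)
    (u : Set.Ioc (0:ℝ) 1 → (Fin d → ℝ) → ℝ)
    (hsmooth : ∀ ε, ContDiff ℝ (⊤ : ℕ∞) (u ε))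
    (hmod : ∀ K ⊆ Ω, IsCompact K → ∀ l : ℕ, ∃ m : ℕ,
      Tendsto (fun ε : Set.Ioc (0:ℝ) 1 => (ε : ℝ) ^ m * pKl K l (u ε)) l01 (nhds 0)) :
    nuxp Ω u x p =
      sInf {r : ℝ | 0 ≤ r ∧ ∃ (V : Set (Fin d → ℝ)) (f : (Fin d → ℝ) → ℝ),
        IsOpen V ∧ x ∈ V ∧ V ⊆ Ω ∧ ContDiffOn ℝ (p : ℕ∞) f V ∧
        ∀ i ≤ p, ∀ K ⊆ V, IsCompact K →
          TendstoUniformlyOn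
            (fun (ε : Set.Ioc (0:ℝ) 1) y =>
              iteratedFDeriv ℝ i (fun z => (ε : ℝ) ^ r * u ε z) y)
            (iteratedFDeriv ℝ i f) l01 K} := by
  set N := {r : ℝ | 0 ≤ r ∧ ∃ (V : Set (Fin d → ℝ)) (f : (Fin d → ℝ) → ℝ),
        IsOpen V ∧ x ∈ V ∧ V ⊆ Ω ∧ ContDiffOn ℝ (p : ℕ∞) f V ∧
        ∀ i ≤ p, ∀ K ⊆ V, IsCompact K →
          TendstoUniformlyOn
            (fun (ε : Set.Ioc (0:ℝ) 1) y =>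
              iteratedFDeriv ℝ i (fun z => (ε : ℝ) ^ r * u ε z) y)
            (iteratedFDeriv ℝ i f) l01 K} with hNdef
  have hmem : ∀ r : ℝ, nuxp Ω u x p < r → r ∈ N := fun r h =>
    mem_N_of_nuxp_lt Ω hΩ p x hx u hsmooth hmod h
  have hNne : N.Nonempty := ⟨nuxp Ω u x p + 1, hmem _ (lt_add_one _)⟩
  have hNbd : BddBelow N := ⟨0, fun y hy => hy.1⟩
  refine le_antisymm ?_ ?_
  · refine le_csInf hNne ?_
    rintro r ⟨hr0, V, f, hVo, hxV, hVΩ, hf, hconv⟩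
    obtain ⟨V', hV'o, hxV', hV'c, hV'V⟩ := exists_nice_nbhd hVo hxV
    have hK'Ω : closure V' ⊆ Ω := hV'V.trans hVΩ
    have hev : ∀ᶠ ε : Set.Ioc (0:ℝ) 1 in l01, ∀ i : Fin (p+1), ∀ y ∈ closure V',
        dist (iteratedFDeriv ℝ i.1 f y)
          (iteratedFDeriv ℝ i.1 (fun z => (ε:ℝ)^r * u ε z) y) < 1 := by
      rw [Filter.eventually_all]
      intro i
      exact (Metric.tendstoUniformlyOn_iff.mp
        (hconv i.1 (Nat.lt_succ_iff.1 i.2) (closure V') hV'V hV'c)) 1 one_pos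
    obtain ⟨ε₀, hε₀⟩ := hev.exists
    have hsm0 : ContDiff ℝ (⊤:ℕ∞) (fun z => (ε₀:ℝ)^r * u ε₀ z) :=
      contDiff_const.mul (hsmooth ε₀)
    set M₀ := pKl (closure V') p (fun z => (ε₀:ℝ)^r * u ε₀ z) with hM₀
    have hfb : ∀ y ∈ closure V', ∀ i : Fin (p+1),
        ‖iteratedFDeriv ℝ i.1 f y‖ ≤ M₀ + 1 := by
      intro y hy i
      have h1 := hε₀ i y hy
      have h2 : ‖iteratedFDeriv ℝ i.1 (fun z => (ε₀:ℝ)^r * u ε₀ z) y‖ ≤ M₀ :=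
        norm_le_pKl hV'c hsm0 hy (Nat.lt_succ_iff.1 i.2)
      have h3 : ‖iteratedFDeriv ℝ i.1 f y‖ ≤
          ‖iteratedFDeriv ℝ i.1 (fun z => (ε₀:ℝ)^r * u ε₀ z) y‖ +
          dist (iteratedFDeriv ℝ i.1 f y)
            (iteratedFDeriv ℝ i.1 (fun z => (ε₀:ℝ)^r * u ε₀ z) y) := by
        rw [dist_eq_norm]
        exact norm_le_norm_add_norm_sub' _ _
      linarith
    have hM₀0 : 0 ≤ M₀ := pKl_nonneg _ _ _
    have hevM : ∀ᶠ ε : Set.Ioc (0:ℝ) 1 in l01, ∀ l : ℕ, l ≤ p →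
        pKl (closure V') l (u ε) ≤ (M₀ + 2) / (ε:ℝ)^r := by
      filter_upwards [hev] with ε hε l hl
      have hεpos : (0:ℝ) < ε := ε.2.1
      have hrp : (0:ℝ) < (ε:ℝ)^r := Real.rpow_pos_of_pos hεpos r
      refine pKl_le ?_ (by positivity)
      intro y hy i hi
      have hi' : i < p + 1 := Nat.lt_succ_of_le (hi.trans hl)
      have h1 := hε ⟨i, hi'⟩ y hy
      have h4 := hfb y hy ⟨i, hi'⟩
      have h2 : ‖iteratedFDeriv ℝ i (fun z => (ε:ℝ)^r * u ε z) y‖ ≤ M₀ + 2 := by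
        have h3 : ‖iteratedFDeriv ℝ i (fun z => (ε:ℝ)^r * u ε z) y‖ ≤
            ‖iteratedFDeriv ℝ i f y‖ +
            dist (iteratedFDeriv ℝ i f y)
              (iteratedFDeriv ℝ i (fun z => (ε:ℝ)^r * u ε z) y) := by
          rw [dist_eq_norm]
          exact norm_le_norm_add_norm_sub _ _
        simp only at h1 h3 h4
        linarith
      have hre : (fun z => (ε:ℝ)^r * u ε z) = (fun z => (ε:ℝ)^r • u ε z) := by
        simp [smul_eq_mul]
      have hsm : ContDiff ℝ (i:ℕ∞) (u ε) := (hsmooth ε).of_le (by exact_mod_cast le_top)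
      rw [hre, iteratedFDeriv_const_smul_apply' hsm.contDiffAt,
        norm_smul ((ε:ℝ)^r) (iteratedFDeriv ℝ i (u ε) y), Real.norm_eq_abs,
        abs_of_pos hrp] at h2
      rw [le_div_iff₀ hrp, mul_comm]
      exact h2
    have hnuxl : ∀ l : ℕ, l ≤ p → nuxl Ω u x l ≤ r := by
      intro l hl
      have hS : ∀ r'' : ℝ, r < r'' → Tendsto
          (fun ε : Set.Ioc (0:ℝ) 1 => (ε:ℝ)^r'' * pKl (closure V') l (u ε)) l01 (𝓝 0) := by
        intro r'' hr''
        have hg : Tendsto (fun ε : Set.Ioc (0:ℝ) 1 => (ε:ℝ)^(r''-r) * (M₀ + 2)) l01 (𝓝 0) := by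
          simpa using (tendsto_rpow_l01 (by linarith : (0:ℝ) < r'' - r)).mul_const (M₀ + 2)
        refine squeeze_zero' ?_ ?_ hg
        · exact Eventually.of_forall fun ε =>
            mul_nonneg (Real.rpow_pos_of_pos ε.2.1 _).le (pKl_nonneg _ _ _)
        · filter_upwards [hevM] with ε hε
          have hεpos : (0:ℝ) < ε := ε.2.1
          calc (ε:ℝ)^r'' * pKl (closure V') l (u ε)
              ≤ (ε:ℝ)^r'' * ((M₀ + 2) / (ε:ℝ)^r) :=
                mul_le_mul_of_nonneg_left (hε l hl) (Real.rpow_pos_of_pos hεpos _).le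
            _ = (ε:ℝ)^(r''-r) * (M₀ + 2) := by
                rw [Real.rpow_sub hεpos]; ring
      have hvKl : vKl u (closure V') l ≤ r := by
        by_cases hbd : BddBelow {s : ℝ | Tendsto
            (fun ε : Set.Ioc (0:ℝ) 1 => (ε:ℝ)^s * pKl (closure V') l (u ε)) l01 (𝓝 0)}
        · by_contra hc
          push_neg at hc
          have h1 : ((r + vKl u (closure V') l)/2) ∈ {s : ℝ | Tendsto
              (fun ε : Set.Ioc (0:ℝ) 1 => (ε:ℝ)^s * pKl (closure V') l (u ε)) l01 (𝓝 0)} :=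
            hS _ (by linarith)
          have h2 : vKl u (closure V') l ≤ (r + vKl u (closure V') l)/2 :=
            csInf_le hbd h1
          linarith
        · rw [vKl, Real.sInf_of_not_bddBelow hbd]
          exact hr0
      have hnuKl : nuKl u (closure V') l ≤ r := max_le hvKl hr0
      calc nuxl Ω u x l ≤ nuKl u (closure V') l := by
            refine csInf_le ⟨0, ?_⟩ ⟨V', hV'o, hxV', hV'c, hK'Ω, rfl⟩
            rintro z ⟨W, _, _, _, _, rfl⟩
            exact le_max_right _ _
        _ ≤ r := hnuKl
    exact ciSup_le fun l => hnuxl l.1 (Nat.lt_succ_iff.1 l.2)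
  · by_contra hcon
    push_neg at hcon
    have h1 : sInf N ≤ (nuxp Ω u x p + sInf N)/2 :=
      csInf_le hNbd (hmem _ (by linarith))
    linarith
end
end

section
/- Let Ω be an open subset of ℝ^d, let (u_ε) and (v_ε) be families of continuous real-valued functions on Ω, and let x ∈ Ω. Write (uv)_ε = u_ε · v_ε pointwise. Then: (1) if Σ_x(v) = ∅ then Σ_x(uv) ⊆ Σ_x(u); (2) if Σ_x(u) = ∅ then Σ_x(uv) ⊆ Σ_x(v); (3) if Σ_x(u) and Σ_x(v) are both nonempty and neither equals all of [0,∞), then Σ_x(uv) ⊆ [0, sSup Σ_x(u) + sSup Σ_x(v)]. -/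
open Filter Topology

noncomputable section

/-- `N_x(u)`: the set of scales `r ≥ 0` such that `ε^r u_ε` converges in `C⁰`
(uniformly on compacts) near `x` to some continuous `f`. -/
def Nx {d : ℕ} (Ω : Set (Fin d → ℝ)) (u : Set.Ioc (0:ℝ) 1 → (Fin d → ℝ) → ℝ)
    (x : Fin d → ℝ) : Set ℝ :=
  {r : ℝ | 0 ≤ r ∧ ∃ (V : Set (Fin d → ℝ)) (f : (Fin d → ℝ) → ℝ),
    IsOpen V ∧ x ∈ V ∧ V ⊆ Ω ∧ ContinuousOn f V ∧
    ∀ K ⊆ V, IsCompact K →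
      TendstoUniformlyOn (fun (ε : Set.Ioc (0:ℝ) 1) y => (ε : ℝ) ^ r * u ε y) f l01 K}

/-- `Σ_x(u) = [0,∞) \ N_x(u)`. -/
def SigmaX {d : ℕ} (Ω : Set (Fin d → ℝ)) (u : Set.Ioc (0:ℝ) 1 → (Fin d → ℝ) → ℝ)
    (x : Fin d → ℝ) : Set ℝ :=
  Set.Ici (0:ℝ) \ Nx Ω u x

/-- Product of uniformly convergent families with bounded limits converges uniformly. -/
lemma tendstoUniformlyOn_mul_of_bound {ι β : Type*} {l : Filter ι} {s : Set β}
    {f g : ι → β → ℝ} {F G : β → ℝ} {C : ℝ} (hC : 0 ≤ C)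
    (hf : TendstoUniformlyOn f F l s) (hg : TendstoUniformlyOn g G l s)
    (hF : ∀ y ∈ s, |F y| ≤ C) (hG : ∀ y ∈ s, |G y| ≤ C) :
    TendstoUniformlyOn (fun n y => f n y * g n y) (fun y => F y * G y) l s := by
  rw [Metric.tendstoUniformlyOn_iff] at hf hg ⊢
  intro η hη
  set δ : ℝ := min 1 (η / (2 * C + 2)) with hδdef
  have hδpos : 0 < δ := lt_min one_pos (div_pos hη (by linarith))
  filter_upwards [hf δ hδpos, hg δ hδpos] with n hfn hgn y hy
  have h1 : |f n y - F y| < δ := by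
    have := hfn y hy; rwa [Real.dist_eq, abs_sub_comm] at this
  have h2 : |g n y - G y| < δ := by
    have := hgn y hy; rwa [Real.dist_eq, abs_sub_comm] at this
  have hgny : |g n y| ≤ C + δ := by
    calc |g n y| = |G y + (g n y - G y)| := by ring_nf
    _ ≤ |G y| + |g n y - G y| := abs_add_le _ _
    _ ≤ C + δ := add_le_add (hG y hy) h2.le
  have key : |f n y * g n y - F y * G y| < η := by
    have hid : f n y * g n y - F y * G y = (f n y - F y) * g n y + F y * (g n y - G y) := by
      ring
    have hδ1 : δ ≤ 1 := min_le_left _ _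
    have hδ2 : δ ≤ η / (2 * C + 2) := min_le_right _ _
    calc |f n y * g n y - F y * G y|
        ≤ |f n y - F y| * |g n y| + |F y| * |g n y - G y| := by
          rw [hid]; exact (abs_add_le _ _).trans (by rw [abs_mul, abs_mul])
      _ ≤ δ * (C + δ) + C * δ := by
          apply add_le_add
          · exact mul_le_mul h1.le hgny (abs_nonneg _) hδpos.le
          · exact mul_le_mul (hF y hy) h2.le (abs_nonneg _) hC
      _ ≤ δ * (C + 1) + C * δ := by nlinarith
      _ = δ * (2 * C + 1) := by ring
      _ ≤ (η / (2 * C + 2)) * (2 * C + 1) := by nlinarith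
      _ < η := by
          rw [div_mul_eq_mul_div, div_lt_iff₀ (by linarith : (0:ℝ) < 2 * C + 2)]
          nlinarith
  rw [Real.dist_eq, abs_sub_comm]
  exact key

lemma tendstoUniformlyOn_const_of_tendsto {ι β : Type*} {l : Filter ι} {s : Set β}
    {c : ι → ℝ} {a : ℝ} (h : Tendsto c l (𝓝 a)) :
    TendstoUniformlyOn (fun n (_ : β) => c n) (fun _ => a) l s := by
  rw [Metric.tendstoUniformlyOn_iff]
  intro η hη
  filter_upwards [Metric.tendsto_nhds.mp h η hη] with n hn y _
  rwa [dist_comm] at hn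

/-- `Nx` is upward closed. -/
lemma Nx_mono {d : ℕ} {Ω : Set (Fin d → ℝ)} {u : Set.Ioc (0:ℝ) 1 → (Fin d → ℝ) → ℝ}
    {x : Fin d → ℝ} {r r' : ℝ} (hr : r ∈ Nx Ω u x) (hrr' : r ≤ r') : r' ∈ Nx Ω u x := by
  obtain ⟨hr0, V, f, hV, hxV, hVΩ, hf, hconv⟩ := hr
  rcases eq_or_lt_of_le hrr' with rfl | hlt
  · exact ⟨hr0, V, f, hV, hxV, hVΩ, hf, hconv⟩
  refine ⟨le_trans hr0 hrr', V, fun _ => 0, hV, hxV, hVΩ, continuousOn_const, ?_⟩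
  intro K hKV hK
  obtain ⟨C, hCb⟩ := hK.exists_bound_of_continuousOn (hf.mono hKV)
  set C' : ℝ := max C 0 with hC'
  have hC'0 : 0 ≤ C' := le_max_right _ _
  have hδ : (0:ℝ) < r' - r := by linarith
  -- tendsto (fun ε => ε^(r'-r)) to 0
  have hval : Tendsto (fun ε : Set.Ioc (0:ℝ) 1 => (ε : ℝ)) l01 (𝓝[>] 0) :=
    tendsto_comap
  have hpow : Tendsto (fun ε : Set.Ioc (0:ℝ) 1 => (ε : ℝ) ^ (r' - r)) l01 (𝓝 0) := by
    have hc : ContinuousAt (fun t : ℝ => t ^ (r' - r)) 0 :=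
      Real.continuousAt_rpow_const 0 (r' - r) (Or.inr hδ.le)
    have : Tendsto (fun t : ℝ => t ^ (r' - r)) (𝓝[>] 0) (𝓝 ((0:ℝ) ^ (r' - r))) :=
      hc.continuousWithinAt.tendsto
    rw [Real.zero_rpow hδ.ne'] at this
    exact this.comp hval
  have key := tendstoUniformlyOn_mul_of_bound (f := fun (ε : Set.Ioc (0:ℝ) 1) (_ : Fin d → ℝ) => (ε : ℝ) ^ (r' - r))
    (g := fun (ε : Set.Ioc (0:ℝ) 1) y => (ε : ℝ) ^ r * u ε y) (F := fun _ => 0) (G := f)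
    (s := K) hC'0 (tendstoUniformlyOn_const_of_tendsto hpow) (hconv K hKV hK)
    (fun y _ => by simpa using hC'0)
    (fun y hy => le_trans (by simpa using hCb y hy) (le_max_left _ _))
  have heq : (fun (ε : Set.Ioc (0:ℝ) 1) y => (ε : ℝ) ^ r' * u ε y)
      = fun (ε : Set.Ioc (0:ℝ) 1) y => (ε : ℝ) ^ (r' - r) * ((ε : ℝ) ^ r * u ε y) := by
    funext ε y
    rw [← mul_assoc, ← Real.rpow_add ε.2.1]
    ring_nf
  rw [heq]
  simpa using key

/-- `Nx` is closed under addition for products. -/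
lemma Nx_add {d : ℕ} {Ω : Set (Fin d → ℝ)} {u v : Set.Ioc (0:ℝ) 1 → (Fin d → ℝ) → ℝ}
    {x : Fin d → ℝ} {r s : ℝ} (hr : r ∈ Nx Ω u x) (hs : s ∈ Nx Ω v x) :
    r + s ∈ Nx Ω (fun ε y => u ε y * v ε y) x := by
  obtain ⟨hr0, V, f, hV, hxV, hVΩ, hf, hconvf⟩ := hr
  obtain ⟨hs0, W, g, hW, hxW, hWΩ, hg, hconvg⟩ := hs
  refine ⟨by linarith, V ∩ W, fun y => f y * g y, hV.inter hW, ⟨hxV, hxW⟩,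
    fun y hy => hVΩ hy.1, (hf.mono Set.inter_subset_left).mul (hg.mono Set.inter_subset_right), ?_⟩
  intro K hKVW hK
  obtain ⟨Cf, hCf⟩ := hK.exists_bound_of_continuousOn
    (hf.mono (hKVW.trans Set.inter_subset_left))
  obtain ⟨Cg, hCg⟩ := hK.exists_bound_of_continuousOn
    (hg.mono (hKVW.trans Set.inter_subset_right))
  set C : ℝ := max (max Cf Cg) 0 with hC
  have hC0 : 0 ≤ C := le_max_right _ _
  have key := tendstoUniformlyOn_mul_of_bound
    (f := fun (ε : Set.Ioc (0:ℝ) 1) y => (ε : ℝ) ^ r * u ε y)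
    (g := fun (ε : Set.Ioc (0:ℝ) 1) y => (ε : ℝ) ^ s * v ε y) (F := f) (G := g)
    (s := K) hC0 (hconvf K (hKVW.trans Set.inter_subset_left) hK)
    (hconvg K (hKVW.trans Set.inter_subset_right) hK)
    (fun y hy => le_trans (by simpa using hCf y hy)
      (le_trans (le_max_left _ _) (le_max_left _ _)))
    (fun y hy => le_trans (by simpa using hCg y hy)
      (le_trans (le_max_right _ _) (le_max_left _ _)))
  have heq : (fun (ε : Set.Ioc (0:ℝ) 1) y => (ε : ℝ) ^ (r + s) * (u ε y * v ε y))
      = fun (ε : Set.Ioc (0:ℝ) 1) y =>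
          ((ε : ℝ) ^ r * u ε y) * ((ε : ℝ) ^ s * v ε y) := by
    funext ε y
    rw [Real.rpow_add ε.2.1]
    ring
  rw [heq]
  exact key

/-- `SigmaX` is downward closed within `[0, ∞)`. -/
lemma SigmaX_downward {d : ℕ} {Ω : Set (Fin d → ℝ)} {u : Set.Ioc (0:ℝ) 1 → (Fin d → ℝ) → ℝ}
    {x : Fin d → ℝ} {a b : ℝ} (ha : a ∈ SigmaX Ω u x) (hb0 : 0 ≤ b) (hba : b ≤ a) :
    b ∈ SigmaX Ω u x :=
  ⟨hb0, fun hbN => ha.2 (Nx_mono hbN hba)⟩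

/-- behavior of `Σ_x` under pointwise products. -/
theorem SigmaX_mul {d : ℕ} (Ω : Set (Fin d → ℝ)) (hΩ : IsOpen Ω)
    (u v : Set.Ioc (0:ℝ) 1 → (Fin d → ℝ) → ℝ)
    (hu : ∀ ε, ContinuousOn (u ε) Ω) (hv : ∀ ε, ContinuousOn (v ε) Ω)
    (x : Fin d → ℝ) (hx : x ∈ Ω) :
    (SigmaX Ω v x = ∅ →
      SigmaX Ω (fun ε y => u ε y * v ε y) x ⊆ SigmaX Ω u x) ∧
    (SigmaX Ω u x = ∅ →
      SigmaX Ω (fun ε y => u ε y * v ε y) x ⊆ SigmaX Ω v x) ∧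
    (SigmaX Ω u x ≠ ∅ → SigmaX Ω v x ≠ ∅ →
      SigmaX Ω u x ≠ Set.Ici 0 → SigmaX Ω v x ≠ Set.Ici 0 →
      SigmaX Ω (fun ε y => u ε y * v ε y) x ⊆
        Set.Icc 0 (sSup (SigmaX Ω u x) + sSup (SigmaX Ω v x))) := by
  have memN : ∀ (w : Set.Ioc (0:ℝ) 1 → (Fin d → ℝ) → ℝ) (t : ℝ), 0 ≤ t →
      t ∉ SigmaX Ω w x → t ∈ Nx Ω w x := by
    intro w t ht hns
    by_contra h
    exact hns ⟨ht, h⟩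
  refine ⟨?_, ?_, ?_⟩
  · intro hS_v t ht
    have h0v : (0:ℝ) ∈ Nx Ω v x := memN v 0 le_rfl (by simp [hS_v])
    refine ⟨ht.1, fun htN => ht.2 ?_⟩
    have := Nx_add htN h0v
    rwa [add_zero] at this
  · intro hS_u t ht
    have h0u : (0:ℝ) ∈ Nx Ω u x := memN u 0 le_rfl (by simp [hS_u])
    refine ⟨ht.1, fun htN => ht.2 ?_⟩
    have := Nx_add h0u htN
    rwa [zero_add] at this
  · intro hS_u hS_v hS_u' hS_v' t ht
    obtain ⟨a, ha⟩ := Set.nonempty_iff_ne_empty.mpr hS_u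
    obtain ⟨b, hb⟩ := Set.nonempty_iff_ne_empty.mpr hS_v
    -- bounds
    have hbdd : ∀ (w : Set.Ioc (0:ℝ) 1 → (Fin d → ℝ) → ℝ),
        SigmaX Ω w x ≠ Set.Ici 0 → BddAbove (SigmaX Ω w x) := by
      intro w hne
      obtain ⟨t0, ht0⟩ : ∃ t0, t0 ∈ Set.Ici (0:ℝ) ∧ t0 ∉ SigmaX Ω w x := by
        by_contra h
        push_neg at h
        exact hne (Set.Subset.antisymm (fun z hz => hz.1) h)
      refine ⟨t0, fun z hz => ?_⟩
      by_contra hzt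
      push_neg at hzt
      exact ht0.2 (SigmaX_downward hz ht0.1 hzt.le)
    have hbu := hbdd u hS_u'
    have hbv := hbdd v hS_v'
    set R := sSup (SigmaX Ω u x)
    set S := sSup (SigmaX Ω v x)
    have hR0 : 0 ≤ R := le_trans ha.1 (le_csSup hbu ha)
    have hS0 : 0 ≤ S := le_trans hb.1 (le_csSup hbv hb)
    refine ⟨ht.1, ?_⟩
    by_contra hgt
    push_neg at hgt
    set δ : ℝ := (t - R - S) / 2 with hδ
    have hδpos : 0 < δ := by simp only [hδ]; linarith
    have hrN : R + δ ∈ Nx Ω u x := by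
      apply memN u _ (by linarith)
      intro hmem
      have := le_csSup hbu hmem
      linarith
    have hsN : S + δ ∈ Nx Ω v x := by
      apply memN v _ (by linarith)
      intro hmem
      have := le_csSup hbv hmem
      linarith
    have := Nx_add hrN hsN
    have heq : R + δ + (S + δ) = t := by simp only [hδ]; ring
    rw [heq] at this
    exact ht.2 this
end
end

section
/- Let Ω be an open subset of ℝ^d, let (u_ε) be a family of continuous real-valued functions on Ω, let x ∈ Ω and let p ≥ 1 be a natural number. Write (u^p)_ε = (u_ε)^p pointwise. Then: (1) if Σ_x(u) = ∅ then Σ_x(u^p) = ∅; (2) if Σ_x(u) is nonempty and not equal to all of [0,∞), then Σ_x(u^p) ⊆ [0, p · sSup Σ_x(u)]. -/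
open Filter Topology

noncomputable section

/-- Product of uniformly convergent families with bounded limits converges uniformly. -/
lemma tuo_mul {ι β : Type*} {l : Filter ι} {K : Set β} {F G : ι → β → ℝ} {f g : β → ℝ}
    {Cf Cg : ℝ} (hCf : 0 ≤ Cf) (hCg : 0 ≤ Cg)
    (hbf : ∀ y ∈ K, |f y| ≤ Cf) (hbg : ∀ y ∈ K, |g y| ≤ Cg)
    (hF : TendstoUniformlyOn F f l K) (hG : TendstoUniformlyOn G g l K) :
    TendstoUniformlyOn (fun i y => F i y * G i y) (fun y => f y * g y) l K := by
  rw [Metric.tendstoUniformlyOn_iff] at hF hG ⊢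
  intro ε hε
  have hD : (0:ℝ) < Cf + Cg + 2 := by linarith
  set δ := min 1 (ε / (Cf + Cg + 2)) with hδdef
  have hδ1 : δ ≤ 1 := min_le_left _ _
  have hδ2 : δ ≤ ε / (Cf + Cg + 2) := min_le_right _ _
  have hδpos : 0 < δ := lt_min one_pos (div_pos hε hD)
  filter_upwards [hF δ hδpos, hG δ hδpos] with i hFi hGi y hy
  have h1 := hFi y hy
  have h2 := hGi y hy
  rw [Real.dist_eq] at h1 h2 ⊢
  have hFb : |F i y| ≤ Cf + 1 := by
    have e1 : |F i y| ≤ |f y| + |f y - F i y| := by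
      simpa [sub_sub_cancel] using abs_sub (f y) (f y - F i y)
    have := hbf y hy
    linarith
  have key : f y * g y - F i y * G i y
      = (f y - F i y) * g y + F i y * (g y - G i y) := by ring
  calc |f y * g y - F i y * G i y|
      ≤ |(f y - F i y) * g y| + |F i y * (g y - G i y)| := by
        rw [key]; exact abs_add_le _ _
    _ = |f y - F i y| * |g y| + |F i y| * |g y - G i y| := by rw [abs_mul, abs_mul]
    _ ≤ δ * Cg + (Cf + 1) * δ := by
        refine add_le_add (mul_le_mul h1.le (hbg y hy) (abs_nonneg _) hδpos.le)
          (mul_le_mul hFb h2.le (abs_nonneg _) (by linarith))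
    _ = (Cf + Cg + 1) * δ := by ring
    _ ≤ (Cf + Cg + 1) * (ε / (Cf + Cg + 2)) := by
        exact mul_le_mul_of_nonneg_left hδ2 (by linarith)
    _ < (Cf + Cg + 2) * (ε / (Cf + Cg + 2)) := by
        exact mul_lt_mul_of_pos_right (by linarith) (div_pos hε hD)
    _ = ε := mul_div_cancel₀ _ hD.ne'

/-- Powers of uniformly convergent families with bounded limit converge uniformly. -/
lemma tuo_pow {ι β : Type*} {l : Filter ι} {K : Set β} {F : ι → β → ℝ} {f : β → ℝ}
    {C : ℝ} (hC : 0 ≤ C) (hb : ∀ y ∈ K, |f y| ≤ C)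
    (hF : TendstoUniformlyOn F f l K) (p : ℕ) :
    TendstoUniformlyOn (fun i y => (F i y) ^ p) (fun y => (f y) ^ p) l K := by
  induction p with
  | zero => simpa using (tendsto_const_nhds : Tendsto (fun _ : ι => (1:ℝ)) l (nhds 1)).tendstoUniformlyOn_const K
  | succ n ih =>
      have hbn : ∀ y ∈ K, |(f y) ^ n| ≤ C ^ n := by
        intro y hy
        rw [abs_pow]
        exact pow_le_pow_left₀ (abs_nonneg _) (hb y hy) n
      have := tuo_mul (pow_nonneg hC n) hC hbn hb ih hF
      simpa [pow_succ] using this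

/-- For `t > 0`, `ε^t → 0` uniformly (it does not depend on `y`). -/
lemma tuo_rpow_zero {β : Type*} {K : Set β} {t : ℝ} (ht : 0 < t) :
    TendstoUniformlyOn (fun (ε : Set.Ioc (0:ℝ) 1) (_ : β) => (ε : ℝ) ^ t)
      (fun _ => (0:ℝ)) l01 K := by
  rw [Metric.tendstoUniformlyOn_iff]
  intro δ hδ
  have h1 : Tendsto (fun ε : Set.Ioc (0:ℝ) 1 => (ε : ℝ)) l01 (nhdsWithin 0 (Set.Ioi 0)) :=
    tendsto_comap
  have h2 : Tendsto (fun x : ℝ => x ^ t) (nhdsWithin 0 (Set.Ioi 0)) (nhds 0) := by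
    have hc : ContinuousAt (fun x : ℝ => x ^ t) 0 :=
      Real.continuousAt_rpow_const 0 t (Or.inr ht.le)
    have h2' : Tendsto (fun x : ℝ => x ^ t) (nhds 0) (nhds ((0:ℝ) ^ t)) := hc.tendsto
    rw [Real.zero_rpow ht.ne'] at h2'
    exact h2'.mono_left nhdsWithin_le_nhds
  have h3 : Tendsto (fun ε : Set.Ioc (0:ℝ) 1 => (ε : ℝ) ^ t) l01 (nhds 0) := h2.comp h1
  filter_upwards [Metric.tendsto_nhds.mp h3 δ hδ] with ε hε y _
  rw [Real.dist_eq] at hε ⊢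
  simpa [abs_sub_comm] using hε

/-- `N_x(u)` is upward closed. -/
lemma Nx_up {d : ℕ} {Ω : Set (Fin d → ℝ)} {u : Set.Ioc (0:ℝ) 1 → (Fin d → ℝ) → ℝ}
    {x : Fin d → ℝ} {r s : ℝ} (hr : r ∈ Nx Ω u x) (hs : r ≤ s) : s ∈ Nx Ω u x := by
  obtain ⟨hr0, V, f, hV, hxV, hVΩ, hf, hK⟩ := hr
  rcases eq_or_lt_of_le hs with rfl | hlt
  · exact ⟨hr0, V, f, hV, hxV, hVΩ, hf, hK⟩
  refine ⟨hr0.trans hs, V, fun _ => 0, hV, hxV, hVΩ, continuousOn_const, ?_⟩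
  intro K hKV hKc
  obtain ⟨C, hC⟩ := hKc.exists_bound_of_continuousOn (hf.mono hKV)
  have hC' : ∀ y ∈ K, |f y| ≤ max C 0 := fun y hy => by
    have := hC y hy
    rw [Real.norm_eq_abs] at this
    exact this.trans (le_max_left _ _)
  have h1 := tuo_rpow_zero (β := Fin d → ℝ) (K := K) (t := s - r) (by linarith)
  have hbf : ∀ y ∈ K, |(fun _ : Fin d → ℝ => (0:ℝ)) y| ≤ 0 := by
    intro y _; simp
  have h2 := tuo_mul le_rfl (le_max_right C 0) hbf hC' h1 (hK K hKV hKc)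
  have h3 : TendstoUniformlyOn (fun (ε : Set.Ioc (0:ℝ) 1) y => (ε : ℝ) ^ s * u ε y)
      (fun y => (0:ℝ) * f y) l01 K := by
    apply h2.congr
    filter_upwards with ε
    intro y _
    show (ε : ℝ) ^ (s - r) * ((ε : ℝ) ^ r * u ε y) = (ε : ℝ) ^ s * u ε y
    rw [← mul_assoc, ← Real.rpow_add ε.2.1, sub_add_cancel]
  simpa using h3

/-- If `r ∈ N_x(u)` then `p·r ∈ N_x(u^p)`. -/
lemma Nx_pow {d : ℕ} {Ω : Set (Fin d → ℝ)} {u : Set.Ioc (0:ℝ) 1 → (Fin d → ℝ) → ℝ}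
    {x : Fin d → ℝ} {r : ℝ} (p : ℕ) (hr : r ∈ Nx Ω u x) :
    (p : ℝ) * r ∈ Nx Ω (fun ε y => (u ε y) ^ p) x := by
  obtain ⟨hr0, V, f, hV, hxV, hVΩ, hf, hK⟩ := hr
  refine ⟨mul_nonneg (Nat.cast_nonneg p) hr0, V, fun y => (f y) ^ p, hV, hxV, hVΩ,
    hf.pow p, ?_⟩
  intro K hKV hKc
  obtain ⟨C, hC⟩ := hKc.exists_bound_of_continuousOn (hf.mono hKV)
  have hC0 : (0:ℝ) ≤ max C 0 := le_max_right _ _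
  have hC' : ∀ y ∈ K, |f y| ≤ max C 0 := fun y hy => by
    have := hC y hy
    rw [Real.norm_eq_abs] at this
    exact this.trans (le_max_left _ _)
  have h := tuo_pow hC0 hC' (hK K hKV hKc) p
  apply h.congr
  filter_upwards with ε
  intro y _
  show ((ε : ℝ) ^ r * u ε y) ^ p = (ε : ℝ) ^ ((p : ℝ) * r) * (u ε y) ^ p
  rw [mul_pow, mul_comm (p : ℝ) r, Real.rpow_mul ε.2.1.le, Real.rpow_natCast]

/-- behavior of `Σ_x` under pointwise powers. -/
theorem SigmaX_pow {d : ℕ} (Ω : Set (Fin d → ℝ)) (hΩ : IsOpen Ω)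
    (u : Set.Ioc (0:ℝ) 1 → (Fin d → ℝ) → ℝ)
    (hu : ∀ ε, ContinuousOn (u ε) Ω)
    (x : Fin d → ℝ) (hx : x ∈ Ω) (p : ℕ) (hp : 1 ≤ p) :
    (SigmaX Ω u x = ∅ → SigmaX Ω (fun ε y => (u ε y) ^ p) x = ∅) ∧
    (SigmaX Ω u x ≠ ∅ → SigmaX Ω u x ≠ Set.Ici 0 →
      SigmaX Ω (fun ε y => (u ε y) ^ p) x ⊆
        Set.Icc 0 ((p : ℝ) * sSup (SigmaX Ω u x))) := by
  constructor
  · -- part 1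
    intro hSig
    have h0 : (0:ℝ) ∈ Nx Ω u x := by
      by_contra h0
      have : (0:ℝ) ∈ SigmaX Ω u x := ⟨Set.self_mem_Ici, h0⟩
      rw [hSig] at this
      exact this
    have h0p : (0:ℝ) ∈ Nx Ω (fun ε y => (u ε y) ^ p) x := by
      have := Nx_pow p h0
      simpa using this
    rw [Set.eq_empty_iff_forall_notMem]
    intro s hs
    exact hs.2 (Nx_up h0p hs.1)
  · -- part 2
    intro hne hnall
    -- there is some r₀ ≥ 0 not in Σ
    obtain ⟨r₀, hr₀⟩ : ∃ r₀, r₀ ∈ Set.Ici (0:ℝ) ∧ r₀ ∉ SigmaX Ω u x := by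
      by_contra h
      push_neg at h
      apply hnall
      apply Set.Subset.antisymm (Set.diff_subset)
      intro t ht
      exact h t ht
    have hr₀N : r₀ ∈ Nx Ω u x := by
      by_contra h
      exact hr₀.2 ⟨hr₀.1, h⟩
    -- Σ is bounded above by r₀
    have hbdd : BddAbove (SigmaX Ω u x) := by
      refine ⟨r₀, fun t ht => ?_⟩
      by_contra hlt
      push_neg at hlt
      exact ht.2 (Nx_up hr₀N hlt.le)
    have hS0 : 0 ≤ sSup (SigmaX Ω u x) := by
      obtain ⟨t, ht⟩ := Set.nonempty_iff_ne_empty.mpr hne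
      exact le_trans ht.1 (le_csSup hbdd ht)
    intro s hs
    refine ⟨hs.1, ?_⟩
    by_contra hgt
    push_neg at hgt
    have hp0 : (0:ℝ) < (p : ℝ) := by exact_mod_cast hp.trans_lt' Nat.zero_lt_one
    have hsp : sSup (SigmaX Ω u x) < s / p := by
      rw [lt_div_iff₀ hp0]
      linarith [mul_comm (sSup (SigmaX Ω u x)) (p : ℝ), hgt]
    have hspN : s / p ∈ Nx Ω u x := by
      by_contra h
      have : s / p ∈ SigmaX Ω u x :=
        ⟨div_nonneg hs.1 hp0.le, h⟩
      exact absurd (le_csSup hbdd this) (not_le.mpr hsp)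
    have := Nx_pow p hspN
    rw [mul_div_cancel₀ s hp0.ne'] at this
    exact hs.2 this
end
end

section
/- Let φ : ℝ → ℝ be smooth, nonnegative, with ∫ φ = 1 and support contained in [−κ, κ] for some κ > 0, let m, n ≥ 1 be natural numbers, and for ε ∈ (0,1] set φ_ε(y) = ε^{−1} φ(y/ε) and define w_ε(x,t) = ∫_0^t φ_ε(x+1−s)^m · φ_ε(x−1+s)^n ds for x ∈ ℝ and t ≥ 0. Then: (1) if |x| > κε then w_ε(x,t) = 0 for all t ≥ 0; (2) if 0 ≤ t < 1 − κε then w_ε(x,t) = 0 for all x ∈ ℝ; (3) for all x ∈ ℝ and t ≥ 0, |w_ε(x,t)| ≤ 2κ · (sup φ)^{m+n} · ε^{1−m−n}; consequently, for every real r > m+n−1, sup_{x∈ℝ, t≥0} |ε^r w_ε(x,t)| → 0 as ε → 0⁺. -/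
open Filter Topology MeasureTheory

noncomputable section

lemma abs_le_of_inv_mul_mem {ε κ A : ℝ} (hε : 0 < ε) (h : ε⁻¹ * A ∈ Set.Icc (-κ) κ) :
    |A| ≤ κ * ε := by
  obtain ⟨h1, h2⟩ := h
  have e1 := mul_le_mul_of_nonneg_left h1 hε.le
  have e2 := mul_le_mul_of_nonneg_left h2 hε.le
  rw [mul_inv_cancel_left₀ hε.ne'] at e1 e2
  rw [abs_le]
  constructor <;> nlinarith

/-- the anomalous singularity of the third component
`w_ε(x,t) = ∫_0^t φ_ε(x+1-s)^m φ_ε(x-1+s)^n ds` of the Rauch–Reed system,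
and the sum-law bound on its strength. -/
theorem rauchReed_sum_law (φ : ℝ → ℝ) (hφ_smooth : ContDiff ℝ (⊤ : ℕ∞) φ)
    (hφ_nonneg : ∀ y, 0 ≤ φ y) (hφ_int : ∫ y, φ y = 1)
    (κ : ℝ) (hκ : 0 < κ) (hφ_supp : Function.support φ ⊆ Set.Icc (-κ) κ)
    (m n : ℕ) (hm : 1 ≤ m) (hn : 1 ≤ n)
    (w : Set.Ioc (0:ℝ) 1 → ℝ → ℝ → ℝ)
    (hw : ∀ ε x t, w ε x t =
      ∫ s in Set.Icc (0:ℝ) t,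
        ((ε : ℝ)⁻¹ * φ ((ε : ℝ)⁻¹ * (x + 1 - s))) ^ m *
        ((ε : ℝ)⁻¹ * φ ((ε : ℝ)⁻¹ * (x - 1 + s))) ^ n) :
    (∀ ε : Set.Ioc (0:ℝ) 1, ∀ x : ℝ, κ * (ε : ℝ) < |x| → ∀ t : ℝ, 0 ≤ t → w ε x t = 0) ∧
    (∀ ε : Set.Ioc (0:ℝ) 1, ∀ t : ℝ, 0 ≤ t → t < 1 - κ * (ε : ℝ) → ∀ x : ℝ, w ε x t = 0) ∧
    (∀ ε : Set.Ioc (0:ℝ) 1, ∀ x t : ℝ, 0 ≤ t →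
      |w ε x t| ≤ 2 * κ * (sSup (Set.range φ)) ^ (m + n) * (ε : ℝ) ^ ((1 : ℝ) - m - n)) ∧
    (∀ r : ℝ, (m : ℝ) + n - 1 < r →
      TendstoUniformlyOn
        (fun (ε : Set.Ioc (0:ℝ) 1) (p : ℝ × ℝ) => (ε : ℝ) ^ r * w ε p.1 p.2)
        0 l01 {p : ℝ × ℝ | 0 ≤ p.2}) := by
  have hφc : Continuous φ := hφ_smooth.continuous
  have hφcs : HasCompactSupport φ := by
    apply HasCompactSupport.intro isCompact_Icc (K := Set.Icc (-κ) κ)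
    intro x hx
    by_contra h
    exact hx (hφ_supp (Function.mem_support.2 h))
  have hbdd : BddAbove (Set.range φ) := hφc.bddAbove_range_of_hasCompactSupport hφcs
  set M : ℝ := sSup (Set.range φ) with hM_def
  have hM : ∀ y, φ y ≤ M := fun y => le_csSup hbdd ⟨y, rfl⟩
  have hM0 : 0 ≤ M := (hφ_nonneg 0).trans (hM 0)
  -- If both factors are nonzero, then |x| ≤ κε and |1-s| ≤ κε.
  have key : ∀ ε : ℝ, 0 < ε → ∀ x s : ℝ,
      φ (ε⁻¹ * (x + 1 - s)) ≠ 0 → φ (ε⁻¹ * (x - 1 + s)) ≠ 0 →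
      |x| ≤ κ * ε ∧ |1 - s| ≤ κ * ε := by
    intro ε hε x s h1 h2
    have m1 := abs_le_of_inv_mul_mem hε (hφ_supp (Function.mem_support.2 h1))
    have m2 := abs_le_of_inv_mul_mem hε (hφ_supp (Function.mem_support.2 h2))
    rw [abs_le] at m1 m2 ⊢
    rw [abs_le]
    constructor <;> constructor <;> linarith [m1.1, m1.2, m2.1, m2.2]
  -- vanishing of the integrand
  have hzero : ∀ ε : ℝ, 0 < ε → ∀ x s : ℝ, (κ * ε < |x| ∨ κ * ε < |1 - s|) →
      (ε⁻¹ * φ (ε⁻¹ * (x + 1 - s))) ^ m * (ε⁻¹ * φ (ε⁻¹ * (x - 1 + s))) ^ n = 0 := by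
    intro ε hε x s hor
    have hfac : φ (ε⁻¹ * (x + 1 - s)) = 0 ∨ φ (ε⁻¹ * (x - 1 + s)) = 0 := by
      by_contra h
      push_neg at h
      obtain ⟨hx, hs⟩ := key ε hε x s h.1 h.2
      rcases hor with h' | h' <;> linarith
    have hm0 : m ≠ 0 := Nat.one_le_iff_ne_zero.mp hm
    have hn0 : n ≠ 0 := Nat.one_le_iff_ne_zero.mp hn
    rcases hfac with h | h <;> simp [h, zero_pow, hm0, hn0]
  -- Part 1
  have part1 : ∀ ε : Set.Ioc (0:ℝ) 1, ∀ x : ℝ, κ * (ε : ℝ) < |x| →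
      ∀ t : ℝ, 0 ≤ t → w ε x t = 0 := by
    intro ε x hx t _
    rw [hw]
    exact setIntegral_eq_zero_of_forall_eq_zero fun s _ => hzero ε ε.2.1 x s (Or.inl hx)
  -- Part 2
  have part2 : ∀ ε : Set.Ioc (0:ℝ) 1, ∀ t : ℝ, 0 ≤ t → t < 1 - κ * (ε : ℝ) →
      ∀ x : ℝ, w ε x t = 0 := by
    intro ε t _ ht x
    rw [hw]
    refine setIntegral_eq_zero_of_forall_eq_zero fun s hs => hzero ε ε.2.1 x s (Or.inr ?_)
    have : s ≤ t := hs.2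
    have h1 : κ * (ε : ℝ) < 1 - s := by linarith
    exact lt_of_lt_of_le h1 (le_abs_self _)
  -- Part 3
  have part3 : ∀ ε : Set.Ioc (0:ℝ) 1, ∀ x t : ℝ, 0 ≤ t →
      |w ε x t| ≤ 2 * κ * M ^ (m + n) * (ε : ℝ) ^ ((1 : ℝ) - m - n) := by
    intro ε x t _
    obtain ⟨hε, hε1⟩ := ε.2
    set e : ℝ := (ε : ℝ)
    set f : ℝ → ℝ := fun s =>
      (e⁻¹ * φ (e⁻¹ * (x + 1 - s))) ^ m * (e⁻¹ * φ (e⁻¹ * (x - 1 + s))) ^ n with hf_def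
    have hlin1 : Continuous fun s : ℝ => e⁻¹ * (x + 1 - s) := by fun_prop
    have hlin2 : Continuous fun s : ℝ => e⁻¹ * (x - 1 + s) := by fun_prop
    have hfc : Continuous f :=
      ((continuous_const.mul (hφc.comp hlin1)).pow m).mul
        ((continuous_const.mul (hφc.comp hlin2)).pow n)
    set a : ℝ := 1 - κ * e
    set b : ℝ := 1 + κ * e
    set C : ℝ := (e⁻¹ * M) ^ (m + n) with hC_def
    have hC0 : 0 ≤ C := by positivity
    -- f vanishes outside Icc a b
    have hsupp : ∀ s, s ∉ Set.Icc a b → f s = 0 := by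
      intro s hs
      refine hzero e hε x s (Or.inr ?_)
      rw [Set.mem_Icc, not_and_or, not_le, not_le] at hs
      rcases hs with h | h
      · exact lt_of_lt_of_le (by simp only [a] at h; linarith) (le_abs_self _)
      · have : κ * e < s - 1 := by simp only [b] at h; linarith
        calc κ * e < s - 1 := this
          _ ≤ |s - 1| := le_abs_self _
          _ = |1 - s| := abs_sub_comm _ _
    have hind : f = (Set.Icc a b).indicator f := by
      funext s
      by_cases h : s ∈ Set.Icc a b
      · rw [Set.indicator_of_mem h]
      · rw [Set.indicator_of_notMem h, hsupp s h]
    -- pointwise bound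
    have hfb : ∀ s, ‖f s‖ ≤ C := by
      intro s
      have hb1 : ∀ y, 0 ≤ e⁻¹ * φ y ∧ e⁻¹ * φ y ≤ e⁻¹ * M := fun y =>
        ⟨mul_nonneg (by positivity) (hφ_nonneg y), mul_le_mul_of_nonneg_left (hM y) (by positivity)⟩
      have h1 := hb1 (e⁻¹ * (x + 1 - s))
      have h2 := hb1 (e⁻¹ * (x - 1 + s))
      have hf0 : 0 ≤ f s := mul_nonneg (pow_nonneg h1.1 m) (pow_nonneg h2.1 n)
      rw [Real.norm_eq_abs, abs_of_nonneg hf0]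
      calc f s ≤ (e⁻¹ * M) ^ m * (e⁻¹ * M) ^ n :=
            mul_le_mul (pow_le_pow_left₀ h1.1 h1.2 m) (pow_le_pow_left₀ h2.1 h2.2 n)
              (pow_nonneg h2.1 n) (pow_nonneg (mul_nonneg (by positivity) hM0) m)
        _ = C := (pow_add _ m n).symm
    -- the integral bound
    have hvol : volume (Set.Icc (0:ℝ) t ∩ Set.Icc a b) ≤ ENNReal.ofReal (2 * (κ * e)) := by
      calc volume (Set.Icc (0:ℝ) t ∩ Set.Icc a b) ≤ volume (Set.Icc a b) :=
            measure_mono Set.inter_subset_right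
        _ = ENNReal.ofReal (b - a) := Real.volume_Icc
        _ = ENNReal.ofReal (2 * (κ * e)) := by congr 1; simp only [a, b]; ring
    have hvol' : volume (Set.Icc (0:ℝ) t ∩ Set.Icc a b) < ⊤ :=
      lt_of_le_of_lt hvol ENNReal.ofReal_lt_top
    have hint : ‖∫ s in Set.Icc (0:ℝ) t ∩ Set.Icc a b, f s‖ ≤ C * (2 * (κ * e)) := by
      calc ‖∫ s in Set.Icc (0:ℝ) t ∩ Set.Icc a b, f s‖
          ≤ C * (volume (Set.Icc (0:ℝ) t ∩ Set.Icc a b)).toReal :=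
            norm_setIntegral_le_of_norm_le_const hvol' (fun s _ => hfb s)
        _ ≤ C * (2 * (κ * e)) := by
            refine mul_le_mul_of_nonneg_left ?_ hC0
            calc (volume (Set.Icc (0:ℝ) t ∩ Set.Icc a b)).toReal
                ≤ (ENNReal.ofReal (2 * (κ * e))).toReal :=
                  ENNReal.toReal_mono ENNReal.ofReal_ne_top hvol
              _ = 2 * (κ * e) := ENNReal.toReal_ofReal (by positivity)
    have hw' : w ε x t = ∫ s in Set.Icc (0:ℝ) t ∩ Set.Icc a b, f s := by
      rw [hw]
      calc (∫ s in Set.Icc (0:ℝ) t, f s)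
          = ∫ s in Set.Icc (0:ℝ) t, (Set.Icc a b).indicator f s := by rw [← hind]
        _ = ∫ s in Set.Icc (0:ℝ) t ∩ Set.Icc a b, f s :=
            setIntegral_indicator measurableSet_Icc
    -- rpow computation
    have hεpow : e ^ ((1 : ℝ) - m - n) = e * (e ^ (m + n))⁻¹ := by
      rw [show (1:ℝ) - m - n = 1 - ((m + n : ℕ) : ℝ) by push_cast; ring,
        Real.rpow_sub hε, Real.rpow_one, Real.rpow_natCast, div_eq_mul_inv]
    rw [hw', hεpow]
    calc |∫ s in Set.Icc (0:ℝ) t ∩ Set.Icc a b, f s| ≤ C * (2 * (κ * e)) := hint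
      _ = 2 * κ * M ^ (m + n) * (e * (e ^ (m + n))⁻¹) := by
          rw [hC_def, mul_pow, inv_pow]; ring
  refine ⟨part1, part2, part3, ?_⟩
  -- Part 4
  intro r hr
  rw [Metric.tendstoUniformlyOn_iff]
  intro δ hδ
  set a : ℝ := r + (1 - m - n) with ha_def
  have ha : 0 < a := by simp only [ha_def]; linarith
  set K : ℝ := 2 * κ * M ^ (m + n) with hK_def
  have hta : Tendsto (fun ε : Set.Ioc (0:ℝ) 1 => ((ε : ℝ)) ^ a) l01 (𝓝 0) := by
    have h1 : Tendsto (fun x : ℝ => x ^ a) (𝓝[>] 0) (𝓝 0) := by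
      have h2 := (Real.continuousAt_rpow_const 0 a (Or.inr ha.le)).tendsto
      rw [Real.zero_rpow ha.ne'] at h2
      exact h2.mono_left nhdsWithin_le_nhds
    exact h1.comp tendsto_comap
  have htK : Tendsto (fun ε : Set.Ioc (0:ℝ) 1 => K * ((ε : ℝ)) ^ a) l01 (𝓝 0) := by
    simpa using hta.const_mul K
  filter_upwards [htK.eventually_lt_const hδ] with ε hε p hp
  obtain ⟨hε0, hε1⟩ := ε.2
  have hwb := part3 ε p.1 p.2 hp
  rw [Pi.zero_apply, dist_zero_left, Real.norm_eq_abs]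
  have hrpow : 0 ≤ (ε : ℝ) ^ r := Real.rpow_nonneg hε0.le _
  calc |(ε : ℝ) ^ r * w ε p.1 p.2| = (ε : ℝ) ^ r * |w ε p.1 p.2| := by
        rw [abs_mul, abs_of_nonneg hrpow]
    _ ≤ (ε : ℝ) ^ r * (K * (ε : ℝ) ^ ((1 : ℝ) - m - n)) := by
        refine mul_le_mul_of_nonneg_left ?_ hrpow
        calc |w ε p.1 p.2| ≤ 2 * κ * M ^ (m + n) * (ε : ℝ) ^ ((1 : ℝ) - m - n) := hwb
          _ = K * (ε : ℝ) ^ ((1 : ℝ) - m - n) := by rw [hK_def]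
    _ = K * (ε : ℝ) ^ a := by
        rw [ha_def, Real.rpow_add hε0]; ring
    _ < δ := hε
end
end
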